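/- For all integers n ≥ 1 and all k with 0 ≤ k ≤ n, P_{1,k,2n} = binom(n−1,k)·binom(n,k+1)·(n!)² and P_{0,k,2n} = binom(n−1,k)·binom(n,k)·(n!)². -/

import Mathlib

namespace DescentParity

/-- Number of descent positions i (1-indexed adjacent pairs) of a permutation of {1,…,m}
    whose first (larger) entry is even. Entries of `Fin m` represent values via `(·:ℕ)+1`. -/
def desBegE (m : ℕ) (σ : Equiv.Perm (Fin m)) : ℕ :=
  (Finset.univ.filter (fun p : Fin m × Fin m =>
    (p.2 : ℕ) = (p.1 : ℕ) + 1 ∧ σ p.2 < σ p.1 ∧ Even ((σ p.1 : ℕ) + 1))).card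

def desEndE (m : ℕ) (σ : Equiv.Perm (Fin m)) : ℕ :=
  (Finset.univ.filter (fun p : Fin m × Fin m =>
    (p.2 : ℕ) = (p.1 : ℕ) + 1 ∧ σ p.2 < σ p.1 ∧ Even ((σ p.2 : ℕ) + 1))).card

def desBegO (m : ℕ) (σ : Equiv.Perm (Fin m)) : ℕ :=
  (Finset.univ.filter (fun p : Fin m × Fin m =>
    (p.2 : ℕ) = (p.1 : ℕ) + 1 ∧ σ p.2 < σ p.1 ∧ Odd ((σ p.1 : ℕ) + 1))).card

def desEndO (m : ℕ) (σ : Equiv.Perm (Fin m)) : ℕ :=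
  (Finset.univ.filter (fun p : Fin m × Fin m =>
    (p.2 : ℕ) = (p.1 : ℕ) + 1 ∧ σ p.2 < σ p.1 ∧ Odd ((σ p.2 : ℕ) + 1))).card

/-- The first entry σ₁ of the permutation is even. -/
def firstEven (m : ℕ) (σ : Equiv.Perm (Fin m)) : Prop :=
  ∃ i : Fin m, (i : ℕ) = 0 ∧ Even ((σ i : ℕ) + 1)

def firstOdd (m : ℕ) (σ : Equiv.Perm (Fin m)) : Prop :=
  ∃ i : Fin m, (i : ℕ) = 0 ∧ Odd ((σ i : ℕ) + 1)

instance (m : ℕ) (σ : Equiv.Perm (Fin m)) : Decidable (firstEven m σ) := by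
  unfold firstEven; infer_instance

instance (m : ℕ) (σ : Equiv.Perm (Fin m)) : Decidable (firstOdd m σ) := by
  unfold firstOdd; infer_instance

def R (k m : ℕ) : ℕ :=
  (Finset.univ.filter (fun σ : Equiv.Perm (Fin m) => desBegE m σ = k)).card

def M (k m : ℕ) : ℕ :=
  (Finset.univ.filter (fun σ : Equiv.Perm (Fin m) => desBegO m σ = k)).card

def P0 (k m : ℕ) : ℕ :=
  (Finset.univ.filter (fun σ : Equiv.Perm (Fin m) => firstOdd m σ ∧ desEndE m σ = k)).card

def P1 (k m : ℕ) : ℕ :=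
  (Finset.univ.filter (fun σ : Equiv.Perm (Fin m) => firstEven m σ ∧ desEndE m σ = k)).card

def Q0 (k m : ℕ) : ℕ :=
  (Finset.univ.filter (fun σ : Equiv.Perm (Fin m) => firstEven m σ ∧ desEndO m σ = k)).card

def Q1 (k m : ℕ) : ℕ :=
  (Finset.univ.filter (fun σ : Equiv.Perm (Fin m) => firstOdd m σ ∧ desEndO m σ = k)).card



open Equiv Finset

variable {M : ℕ}

/-- insert the largest value at position `p`. -/
def ins (p : Fin (M+1)) (σ : Perm (Fin M)) : Perm (Fin (M+1)) :=
  ((finSuccEquiv' p).trans (Equiv.optionCongr σ)).trans (finSuccEquiv' (Fin.last M)).symm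

lemma ins_self (p : Fin (M+1)) (σ : Perm (Fin M)) : ins p σ p = Fin.last M := by
  simp [ins, finSuccEquiv'_at]

lemma ins_succAbove (p : Fin (M+1)) (σ : Perm (Fin M)) (i : Fin M) :
    ins p σ (p.succAbove i) = Fin.castSucc (σ i) := by
  simp [ins, finSuccEquiv'_succAbove, ← Fin.succAbove_last]

lemma succAbove_val (p : Fin (M+1)) (i : Fin M) :
    ((p.succAbove i : Fin (M+1)) : ℕ) = if (i:ℕ) < (p:ℕ) then (i:ℕ) else (i:ℕ)+1 := by
  rcases Nat.lt_or_ge (i:ℕ) (p:ℕ) with h | h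
  · rw [Fin.succAbove_of_castSucc_lt _ _ (by simpa [Fin.lt_def] using h)]
    simp [h]
  · rw [Fin.succAbove_of_le_castSucc _ _ (by simpa [Fin.le_def] using h)]
    simp [Nat.not_lt.2 h]

def isBot (m : ℕ) (σ : Perm (Fin m)) (j : Fin m) : Prop :=
  ∃ i : Fin m, (j:ℕ) = (i:ℕ)+1 ∧ σ j < σ i ∧ Even ((σ j : ℕ)+1)

instance (m : ℕ) (σ : Perm (Fin m)) (j : Fin m) : Decidable (isBot m σ j) := by
  unfold isBot; infer_instance

lemma desEndE_eq_card (m : ℕ) (σ : Perm (Fin m)) :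
    desEndE m σ = (univ.filter (fun j => isBot m σ j)).card := by
  classical
  unfold desEndE
  apply Finset.card_bij (fun p _ => p.2)
  · rintro ⟨i, j⟩ hp
    simp only [mem_filter, mem_univ, true_and] at hp ⊢
    exact ⟨i, hp.1, hp.2.1, hp.2.2⟩
  · rintro ⟨i, j⟩ hp ⟨i', j'⟩ hp' h
    simp only [mem_filter, mem_univ, true_and] at hp hp'
    simp only at h
    subst h
    have : (i:ℕ) = (i':ℕ) := by omega
    simp [Prod.ext_iff, Fin.ext_iff, this]
  · intro j hj
    simp only [mem_filter, mem_univ, true_and] at hj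
    obtain ⟨i, h1, h2, h3⟩ := hj
    exact ⟨⟨i, j⟩, by simp [h1, h2, h3], rfl⟩


lemma not_isBot_ins_self (p : Fin (M+1)) (σ : Perm (Fin M)) :
    ¬ isBot (M+1) (ins p σ) p := by
  rintro ⟨i, h1, h2, h3⟩
  rw [ins_self] at h2
  exact absurd h2 (Fin.not_lt.2 (Fin.le_last _))

lemma isBot_ins_eq (p : Fin (M+1)) (σ : Perm (Fin M)) (i : Fin M) (h : (i:ℕ) = (p:ℕ)) :
    isBot (M+1) (ins p σ) (p.succAbove i) ↔ Even ((σ i : ℕ)+1) := by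
  have hv : ((p.succAbove i : Fin (M+1)) : ℕ) = (p:ℕ) + 1 := by
    rw [succAbove_val]; simp [h]
  constructor
  · rintro ⟨i', h1, h2, h3⟩
    rw [ins_succAbove] at h3
    simpa using h3
  · intro hev
    refine ⟨p, hv, ?_, ?_⟩
    · rw [ins_succAbove, ins_self]
      exact Fin.castSucc_lt_last _
    · rw [ins_succAbove]; simpa using hev

lemma isBot_ins_ne (p : Fin (M+1)) (σ : Perm (Fin M)) (i : Fin M) (h : (i:ℕ) ≠ (p:ℕ)) :
    isBot (M+1) (ins p σ) (p.succAbove i) ↔ isBot M σ i := by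
  constructor
  · rintro ⟨i', h1, h2, h3⟩
    rw [ins_succAbove] at h2 h3
    have hi'p : i' ≠ p := by
      rintro rfl
      rw [succAbove_val] at h1
      split at h1 <;> omega
    obtain ⟨i'', rfl⟩ := Fin.exists_succAbove_eq hi'p
    rw [ins_succAbove] at h2
    refine ⟨i'', ?_, by simpa using h2, by simpa using h3⟩
    rw [succAbove_val, succAbove_val] at h1
    split at h1 <;> split at h1 <;> omega
  · rintro ⟨i'', h1, h2, h3⟩
    refine ⟨p.succAbove i'', ?_, ?_, ?_⟩
    · rw [succAbove_val, succAbove_val]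
      split <;> split <;> omega
    · rw [ins_succAbove, ins_succAbove]
      simpa using h2
    · rw [ins_succAbove]; simpa using h3
lemma desEndE_ins (p : Fin (M+1)) (σ : Perm (Fin M)) :
    desEndE (M+1) (ins p σ) = desEndE M σ +
      (if h : (p:ℕ) < M then
        (if Even ((σ ⟨p, h⟩ : ℕ)+1) ∧ ¬ isBot M σ ⟨p, h⟩ then 1 else 0) else 0) := by
  classical
  rw [desEndE_eq_card, desEndE_eq_card, Finset.card_filter, Finset.card_filter]
  rw [Fin.sum_univ_succAbove _ p]
  rw [if_neg (not_isBot_ins_self p σ)]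
  rcases Nat.lt_or_ge (p:ℕ) M with h | h
  · set i0 : Fin M := ⟨p, h⟩ with hi0
    rw [dif_pos h, zero_add]
    rw [← Finset.add_sum_erase _ _ (Finset.mem_univ i0),
        ← Finset.add_sum_erase _ (fun i => if isBot M σ i then 1 else 0) (Finset.mem_univ i0)]
    have hsum : ∑ i ∈ Finset.univ.erase i0, (if isBot (M+1) (ins p σ) (p.succAbove i) then 1 else 0)
        = ∑ i ∈ Finset.univ.erase i0, (if isBot M σ i then 1 else 0) := by
      apply Finset.sum_congr rfl
      intro i hi
      have hne : (i:ℕ) ≠ (p:ℕ) := by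
        have := Finset.ne_of_mem_erase hi
        simpa [hi0, Fin.ext_iff] using this
      simp only [isBot_ins_ne p σ i hne]
    rw [hsum]
    simp only [isBot_ins_eq p σ i0 rfl]
    rw [← hi0]
    by_cases hb : isBot M σ i0
    · have hev : Even ((σ i0 : ℕ)+1) := by obtain ⟨_, _, _, hh⟩ := hb; exact hh
      simp [hb, hev]
      try ring_nf
    · by_cases hev : Even ((σ i0 : ℕ)+1) <;> simp [hb, hev] <;> try ring_nf
  · rw [dif_neg (Nat.not_lt.2 h), zero_add, add_zero]
    apply Finset.sum_congr rfl
    intro i _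
    simp only [isBot_ins_ne p σ i (by omega)]
lemma firstEven_iff (σ : Perm (Fin (M+1))) :
    firstEven (M+1) σ ↔ Even ((σ 0 : ℕ) + 1) := by
  constructor
  · rintro ⟨i, hi, h⟩
    have : i = 0 := by exact Fin.ext (by simpa using hi)
    rwa [this] at h
  · intro h; exact ⟨0, rfl, h⟩

lemma firstOdd_iff (σ : Perm (Fin (M+1))) :
    firstOdd (M+1) σ ↔ ¬ Even ((σ 0 : ℕ) + 1) := by
  constructor
  · rintro ⟨i, hi, h⟩
    have : i = 0 := by exact Fin.ext (by simpa using hi)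
    rw [this] at h
    simpa [Nat.not_even_iff_odd] using h
  · intro h; exact ⟨0, rfl, by simpa [Nat.not_even_iff_odd] using h⟩

lemma ins_zero_val (p : Fin (M+2)) (σ : Perm (Fin (M+1))) :
    ((ins p σ 0 : Fin (M+2)) : ℕ) = if (p:ℕ) = 0 then M+1 else ((σ 0 : Fin (M+1)) : ℕ) := by
  by_cases hp : (p:ℕ) = 0
  · have : p = 0 := Fin.ext hp
    subst this
    rw [show (0 : Fin (M+2)) = (0 : Fin (M+2)) from rfl]
    rw [ins_self]
    simp
  · have h0 : (0 : Fin (M+2)) = p.succAbove (0 : Fin (M+1)) := by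
      apply Fin.ext
      rw [succAbove_val]
      simp [Nat.pos_of_ne_zero hp]
    rw [h0, ins_succAbove]
    simp [hp]

lemma ins_injective : Function.Injective
    (fun x : Fin (M+1) × Perm (Fin M) => ins x.1 x.2) := by
  rintro ⟨p, σ⟩ ⟨p', σ'⟩ h
  simp only at h
  have hp : p = p' := by
    have h1 : ins p σ p = Fin.last M := ins_self p σ
    have h2 : ins p' σ' p' = Fin.last M := ins_self p' σ'
    rw [h] at h1
    exact (ins p' σ').injective (h1.trans h2.symm)
  subst hp
  have hσ : σ = σ' := by
    apply Equiv.ext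
    intro i
    have := congrArg (fun τ : Perm (Fin (M+1)) => τ (p.succAbove i)) h
    simp only [ins_succAbove] at this
    exact Fin.castSucc_injective _ this
  rw [hσ]

lemma card_filter_ins (Q : Perm (Fin (M+1)) → Prop) [DecidablePred Q] :
    (univ.filter Q).card
      = ∑ σ : Perm (Fin M), (univ.filter (fun p : Fin (M+1) => Q (ins p σ))).card := by
  classical
  have hbij : Function.Bijective (fun x : Fin (M+1) × Perm (Fin M) => ins x.1 x.2) := by
    rw [Fintype.bijective_iff_injective_and_card]
    refine ⟨ins_injective, ?_⟩
    simp [Fintype.card_perm, Nat.factorial_succ]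
  have : (univ.filter Q).card
      = (univ.filter (fun x : Fin (M+1) × Perm (Fin M) => Q (ins x.1 x.2))).card := by
    apply (Finset.card_bij (fun x _ => ins x.1 x.2) ?_ ?_ ?_).symm
    · rintro ⟨p, σ⟩ hx
      simp only [mem_filter, mem_univ, true_and] at hx ⊢
      exact hx
    · rintro x _ y _ hxy
      exact ins_injective hxy
    · intro τ hτ
      obtain ⟨x, hx⟩ := hbij.2 τ
      refine ⟨x, ?_, hx⟩
      simp only [mem_filter, mem_univ, true_and] at hτ ⊢
      simp only at hx
      rw [hx]; exact hτ
  rw [this, Finset.card_filter, Fintype.sum_prod_type, Finset.sum_comm]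
  apply Finset.sum_congr rfl
  intro σ _
  rw [Finset.card_filter]
lemma not_isBot_zero {m : ℕ} (σ : Perm (Fin m)) (j : Fin m) (h : (j:ℕ) = 0) :
    ¬ isBot m σ j := by rintro ⟨i, h1, -, -⟩; omega

lemma isBot_even {m : ℕ} {σ : Perm (Fin m)} {j : Fin m} (h : isBot m σ j) :
    Even ((σ j : ℕ) + 1) := by obtain ⟨-, -, -, h⟩ := h; exact h

lemma firstEven_ins (p : Fin (M+2)) (σ : Perm (Fin (M+1))) :
    firstEven (M+2) (ins p σ) ↔ (if (p:ℕ) = 0 then Even (M+2) else Even ((σ 0 : ℕ)+1)) := by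
  rw [firstEven_iff, ins_zero_val]
  split <;> simp [Nat.add_assoc]

lemma firstOdd_ins (p : Fin (M+2)) (σ : Perm (Fin (M+1))) :
    firstOdd (M+2) (ins p σ) ↔ ¬ (if (p:ℕ) = 0 then Even (M+2) else Even ((σ 0 : ℕ)+1)) := by
  rw [firstOdd_iff, ins_zero_val]
  split <;> simp [Nat.add_assoc]

lemma card_range_even (m : ℕ) :
    ((Finset.range m).filter (fun v => Even (v+1))).card = m / 2 := by
  induction m with
  | zero => simp
  | succ m ih =>
    rw [Finset.range_add_one, Finset.filter_insert]
    by_cases h : Even (m+1)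
    · rw [if_pos h, Finset.card_insert_of_notMem (by simp)]
      rw [Nat.even_iff] at h
      omega
    · rw [if_neg h]
      rw [Nat.even_iff] at h
      omega

lemma card_even_filter {m : ℕ} (σ : Perm (Fin m)) :
    (univ.filter (fun i : Fin m => Even ((σ i : ℕ)+1))).card = m / 2 := by
  rw [← card_range_even m]
  apply Finset.card_bij (fun i _ => (σ i : ℕ))
  · intro i hi
    simp only [mem_filter, mem_univ, true_and] at hi ⊢
    exact ⟨Finset.mem_range.2 (σ i).isLt, hi⟩
  · intro i _ j _ h
    exact σ.injective (Fin.ext h)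
  · intro v hv
    simp only [mem_filter, Finset.mem_range] at hv
    refine ⟨σ.symm ⟨v, hv.1⟩, ?_, by simp⟩
    simp only [mem_filter, mem_univ, true_and, Equiv.apply_symm_apply]
    exact hv.2
def SA (σ : Perm (Fin (M+1))) : Finset (Fin (M+1)) :=
  (univ.erase 0).filter (fun i => Even ((σ i : ℕ)+1) ∧ ¬ isBot (M+1) σ i)

def SB (σ : Perm (Fin (M+1))) : Finset (Fin (M+1)) :=
  (univ.erase 0).filter (fun i => ¬(Even ((σ i : ℕ)+1) ∧ ¬ isBot (M+1) σ i))

lemma SA_add_SB (σ : Perm (Fin (M+1))) : (SA σ).card + (SB σ).card = M := by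
  rw [SA, SB, Finset.card_filter_add_card_filter_not]
  rw [Finset.card_erase_of_mem (Finset.mem_univ _), Finset.card_univ, Fintype.card_fin]
  omega

lemma e0_add_des_add_SA (σ : Perm (Fin (M+1))) :
    (if Even ((σ 0 : ℕ)+1) then 1 else 0) + desEndE (M+1) σ + (SA σ).card = (M+1) / 2 := by
  classical
  rw [← card_even_filter σ]
  rw [desEndE_eq_card]
  rw [Finset.card_filter (fun i : Fin (M+1) => Even ((σ i:ℕ)+1)),
      ← Finset.add_sum_erase _ _ (Finset.mem_univ (0 : Fin (M+1)))]
  rw [Finset.card_filter (fun j => isBot (M+1) σ j),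
      ← Finset.add_sum_erase _ _ (Finset.mem_univ (0 : Fin (M+1)))]
  rw [if_neg (not_isBot_zero σ 0 rfl), zero_add]
  rw [SA, Finset.card_filter]
  have : ∀ i ∈ univ.erase (0 : Fin (M+1)),
      ((if isBot (M+1) σ i then 1 else 0) : ℕ)
        + (if Even ((σ i:ℕ)+1) ∧ ¬ isBot (M+1) σ i then 1 else 0)
      = if Even ((σ i:ℕ)+1) then 1 else 0 := by
    intro i _
    by_cases hb : isBot (M+1) σ i
    · simp [hb, isBot_even hb]
    · by_cases he : Even ((σ i:ℕ)+1) <;> simp [hb, he]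
  rw [add_assoc, ← Finset.sum_add_distrib, Finset.sum_congr rfl this]
lemma castSucc_lt (i : Fin (M+1)) : ((i.castSucc : Fin (M+2)) : ℕ) < M + 1 := by
  simpa using i.isLt

lemma desEndE_ins_castSucc (σ : Perm (Fin (M+1))) (i : Fin (M+1)) :
    desEndE (M+2) (ins i.castSucc σ) = desEndE (M+1) σ +
      (if Even ((σ i : ℕ)+1) ∧ ¬ isBot (M+1) σ i then 1 else 0) := by
  rw [desEndE_ins, dif_pos (castSucc_lt i)]
  congr 2 <;> · congr 1; exact Fin.ext (by simp)

lemma desEndE_ins_last (σ : Perm (Fin (M+1))) :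
    desEndE (M+2) (ins (Fin.last (M+1)) σ) = desEndE (M+1) σ := by
  rw [desEndE_ins, dif_neg (by simp), add_zero]

lemma masterE (σ : Perm (Fin (M+1))) (k : ℕ) :
    (univ.filter fun p : Fin (M+2) =>
        firstEven (M+2) (ins p σ) ∧ desEndE (M+2) (ins p σ) = k).card
  = (if Even (M+2) ∧ desEndE (M+1) σ + (if Even ((σ 0 : ℕ)+1) then 1 else 0) = k
      then 1 else 0)
  + (if Even ((σ 0 : ℕ)+1) then
      ((if k = desEndE (M+1) σ then 1 + (SB σ).card else 0)
       + (if k = desEndE (M+1) σ + 1 then (SA σ).card else 0)) else 0) := by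
  classical
  rw [Finset.card_filter, Fin.sum_univ_castSucc]
  have hlast : (if firstEven (M+2) (ins (Fin.last (M+1)) σ)
        ∧ desEndE (M+2) (ins (Fin.last (M+1)) σ) = k then (1:ℕ) else 0)
      = if Even ((σ 0 : ℕ)+1) ∧ desEndE (M+1) σ = k then 1 else 0 := by
    apply if_congr _ rfl rfl
    rw [desEndE_ins_last, firstEven_ins]
    simp
  have hpt : ∀ i : Fin (M+1), (if firstEven (M+2) (ins i.castSucc σ)
        ∧ desEndE (M+2) (ins i.castSucc σ) = k then (1:ℕ) else 0)
      = if ((if (i:ℕ) = 0 then Even (M+2) else Even ((σ 0 : ℕ)+1))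
          ∧ desEndE (M+1) σ + (if Even ((σ i : ℕ)+1) ∧ ¬ isBot (M+1) σ i then 1 else 0) = k)
          then 1 else 0 := by
    intro i
    apply if_congr _ rfl rfl
    rw [desEndE_ins_castSucc, firstEven_ins]
    simp
  rw [hlast, Finset.sum_congr rfl (fun i _ => hpt i)]
  rw [← Finset.add_sum_erase _ _ (Finset.mem_univ (0 : Fin (M+1)))]
  have h0 : (if ((if ((0:Fin (M+1)):ℕ) = 0 then Even (M+2) else Even ((σ 0 : ℕ)+1))
          ∧ desEndE (M+1) σ + (if Even ((σ 0 : ℕ)+1) ∧ ¬ isBot (M+1) σ 0 then 1 else 0) = k)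
          then (1:ℕ) else 0)
      = if Even (M+2) ∧ desEndE (M+1) σ + (if Even ((σ 0 : ℕ)+1) then 1 else 0) = k
          then 1 else 0 := by
    apply if_congr _ rfl rfl
    simp [not_isBot_zero σ 0 rfl]
  rw [h0]
  by_cases hF : Even ((σ 0 : ℕ)+1)
  · have hpt2 : ∀ i ∈ univ.erase (0 : Fin (M+1)),
        (if ((if (i:ℕ) = 0 then Even (M+2) else Even ((σ 0 : ℕ)+1))
          ∧ desEndE (M+1) σ + (if Even ((σ i : ℕ)+1) ∧ ¬ isBot (M+1) σ i then 1 else 0) = k)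
          then (1:ℕ) else 0)
        = (if k = desEndE (M+1) σ ∧ ¬(Even ((σ i : ℕ)+1) ∧ ¬ isBot (M+1) σ i) then 1 else 0)
          + (if k = desEndE (M+1) σ + 1 ∧ (Even ((σ i : ℕ)+1) ∧ ¬ isBot (M+1) σ i) then 1 else 0) := by
      intro i hi
      have hne : ¬ ((i:ℕ) = 0) := fun h => (Finset.ne_of_mem_erase hi) (Fin.ext h)
      simp only [if_neg hne]
      by_cases hP : Even ((σ i : ℕ)+1) ∧ ¬ isBot (M+1) σ i <;> simp [hP, hF, eq_comm]
    rw [Finset.sum_congr rfl hpt2, Finset.sum_add_distrib]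
    have hA : (∑ i ∈ univ.erase (0 : Fin (M+1)),
        if k = desEndE (M+1) σ + 1 ∧ (Even ((σ i : ℕ)+1) ∧ ¬ isBot (M+1) σ i) then (1:ℕ) else 0)
        = if k = desEndE (M+1) σ + 1 then (SA σ).card else 0 := by
      by_cases hk : k = desEndE (M+1) σ + 1
      · rw [if_pos hk, SA, Finset.card_filter]
        exact Finset.sum_congr rfl fun i _ => by simp [hk]
      · rw [if_neg hk]
        exact Finset.sum_eq_zero fun i _ => by simp [hk]
    have hB : (∑ i ∈ univ.erase (0 : Fin (M+1)),
        if k = desEndE (M+1) σ ∧ ¬(Even ((σ i : ℕ)+1) ∧ ¬ isBot (M+1) σ i) then (1:ℕ) else 0)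
        = if k = desEndE (M+1) σ then (SB σ).card else 0 := by
      by_cases hk : k = desEndE (M+1) σ
      · rw [if_pos hk, SB, Finset.card_filter]
        exact Finset.sum_congr rfl fun i _ => by simp [hk]
      · rw [if_neg hk]
        exact Finset.sum_eq_zero fun i _ => by simp [hk]
    rw [hA, hB, if_pos hF]
    by_cases h1 : k = desEndE (M+1) σ <;> by_cases h2 : k = desEndE (M+1) σ + 1 <;>
      simp [h1, h2, hF] <;> omega
  · have hz : ∀ i ∈ univ.erase (0 : Fin (M+1)),
        (if ((if (i:ℕ) = 0 then Even (M+2) else Even ((σ 0 : ℕ)+1))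
          ∧ desEndE (M+1) σ + (if Even ((σ i : ℕ)+1) ∧ ¬ isBot (M+1) σ i then 1 else 0) = k)
          then (1:ℕ) else 0) = 0 := by
      intro i hi
      have hne : ¬ ((i:ℕ) = 0) := fun h => (Finset.ne_of_mem_erase hi) (Fin.ext h)
      simp [hne, hF]
    rw [Finset.sum_congr rfl hz, Finset.sum_const_zero, if_neg hF]
    simp [hF]
lemma masterO (σ : Perm (Fin (M+1))) (k : ℕ) :
    (univ.filter fun p : Fin (M+2) =>
        firstOdd (M+2) (ins p σ) ∧ desEndE (M+2) (ins p σ) = k).card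
  = (if ¬ Even (M+2) ∧ desEndE (M+1) σ + (if Even ((σ 0 : ℕ)+1) then 1 else 0) = k
      then 1 else 0)
  + (if ¬ Even ((σ 0 : ℕ)+1) then
      ((if k = desEndE (M+1) σ then 1 + (SB σ).card else 0)
       + (if k = desEndE (M+1) σ + 1 then (SA σ).card else 0)) else 0) := by
  classical
  rw [Finset.card_filter, Fin.sum_univ_castSucc]
  have hlast : (if firstOdd (M+2) (ins (Fin.last (M+1)) σ)
        ∧ desEndE (M+2) (ins (Fin.last (M+1)) σ) = k then (1:ℕ) else 0)
      = if ¬ Even ((σ 0 : ℕ)+1) ∧ desEndE (M+1) σ = k then 1 else 0 := by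
    apply if_congr _ rfl rfl
    rw [desEndE_ins_last, firstOdd_ins]
    simp
  have hpt : ∀ i : Fin (M+1), (if firstOdd (M+2) (ins i.castSucc σ)
        ∧ desEndE (M+2) (ins i.castSucc σ) = k then (1:ℕ) else 0)
      = if (¬ (if (i:ℕ) = 0 then Even (M+2) else Even ((σ 0 : ℕ)+1))
          ∧ desEndE (M+1) σ + (if Even ((σ i : ℕ)+1) ∧ ¬ isBot (M+1) σ i then 1 else 0) = k)
          then 1 else 0 := by
    intro i
    apply if_congr _ rfl rfl
    rw [desEndE_ins_castSucc, firstOdd_ins]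
    simp
  rw [hlast, Finset.sum_congr rfl (fun i _ => hpt i)]
  rw [← Finset.add_sum_erase _ _ (Finset.mem_univ (0 : Fin (M+1)))]
  have h0 : (if (¬ (if ((0:Fin (M+1)):ℕ) = 0 then Even (M+2) else Even ((σ 0 : ℕ)+1))
          ∧ desEndE (M+1) σ + (if Even ((σ 0 : ℕ)+1) ∧ ¬ isBot (M+1) σ 0 then 1 else 0) = k)
          then (1:ℕ) else 0)
      = if ¬ Even (M+2) ∧ desEndE (M+1) σ + (if Even ((σ 0 : ℕ)+1) then 1 else 0) = k
          then 1 else 0 := by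
    apply if_congr _ rfl rfl
    simp [not_isBot_zero σ 0 rfl]
  rw [h0]
  by_cases hF : Even ((σ 0 : ℕ)+1)
  · have hz : ∀ i ∈ univ.erase (0 : Fin (M+1)),
        (if (¬ (if (i:ℕ) = 0 then Even (M+2) else Even ((σ 0 : ℕ)+1))
          ∧ desEndE (M+1) σ + (if Even ((σ i : ℕ)+1) ∧ ¬ isBot (M+1) σ i then 1 else 0) = k)
          then (1:ℕ) else 0) = 0 := by
      intro i hi
      have hne : ¬ ((i:ℕ) = 0) := fun h => (Finset.ne_of_mem_erase hi) (Fin.ext h)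
      simp [hne, hF]
    rw [Finset.sum_congr rfl hz, Finset.sum_const_zero]
    simp [hF]
  · have hpt2 : ∀ i ∈ univ.erase (0 : Fin (M+1)),
        (if (¬ (if (i:ℕ) = 0 then Even (M+2) else Even ((σ 0 : ℕ)+1))
          ∧ desEndE (M+1) σ + (if Even ((σ i : ℕ)+1) ∧ ¬ isBot (M+1) σ i then 1 else 0) = k)
          then (1:ℕ) else 0)
        = (if k = desEndE (M+1) σ ∧ ¬(Even ((σ i : ℕ)+1) ∧ ¬ isBot (M+1) σ i) then 1 else 0)
          + (if k = desEndE (M+1) σ + 1 ∧ (Even ((σ i : ℕ)+1) ∧ ¬ isBot (M+1) σ i) then 1 else 0) := by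
      intro i hi
      have hne : ¬ ((i:ℕ) = 0) := fun h => (Finset.ne_of_mem_erase hi) (Fin.ext h)
      simp only [if_neg hne]
      by_cases hP : Even ((σ i : ℕ)+1) ∧ ¬ isBot (M+1) σ i <;> simp [hP, hF, eq_comm]
    rw [Finset.sum_congr rfl hpt2, Finset.sum_add_distrib]
    have hA : (∑ i ∈ univ.erase (0 : Fin (M+1)),
        if k = desEndE (M+1) σ + 1 ∧ (Even ((σ i : ℕ)+1) ∧ ¬ isBot (M+1) σ i) then (1:ℕ) else 0)
        = if k = desEndE (M+1) σ + 1 then (SA σ).card else 0 := by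
      by_cases hk : k = desEndE (M+1) σ + 1
      · rw [if_pos hk, SA, Finset.card_filter]
        exact Finset.sum_congr rfl fun i _ => by simp [hk]
      · rw [if_neg hk]
        exact Finset.sum_eq_zero fun i _ => by simp [hk]
    have hB : (∑ i ∈ univ.erase (0 : Fin (M+1)),
        if k = desEndE (M+1) σ ∧ ¬(Even ((σ i : ℕ)+1) ∧ ¬ isBot (M+1) σ i) then (1:ℕ) else 0)
        = if k = desEndE (M+1) σ then (SB σ).card else 0 := by
      by_cases hk : k = desEndE (M+1) σ
      · rw [if_pos hk, SB, Finset.card_filter]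
        exact Finset.sum_congr rfl fun i _ => by simp [hk]
      · rw [if_neg hk]
        exact Finset.sum_eq_zero fun i _ => by simp [hk]
    rw [hA, hB]
    by_cases h1 : k = desEndE (M+1) σ <;> by_cases h2 : k = desEndE (M+1) σ + 1 <;>
      simp [h1, h2, hF] <;> omega
lemma sum_ite_card {α : Type*} [Fintype α] (Q : α → Prop) [DecidablePred Q] (c : ℕ) :
    (∑ a : α, if Q a then c else 0) = c * (univ.filter Q).card := by
  rw [← Finset.sum_filter, Finset.sum_const, smul_eq_mul, mul_comm]

lemma P1_eq (M k : ℕ) : P1 k (M+1) =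
    (univ.filter (fun σ : Perm (Fin (M+1)) =>
      Even ((σ 0 : ℕ)+1) ∧ desEndE (M+1) σ = k)).card := by
  rw [P1]
  congr 1
  apply Finset.filter_congr
  intro σ _
  rw [firstEven_iff]

lemma P0_eq (M k : ℕ) : P0 k (M+1) =
    (univ.filter (fun σ : Perm (Fin (M+1)) =>
      ¬ Even ((σ 0 : ℕ)+1) ∧ desEndE (M+1) σ = k)).card := by
  rw [P0]
  congr 1
  apply Finset.filter_congr
  intro σ _
  rw [firstOdd_iff]

lemma P1_shift (M k : ℕ) :
    (univ.filter (fun σ : Perm (Fin (M+1)) =>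
      Even ((σ 0 : ℕ)+1) ∧ desEndE (M+1) σ + 1 = k)).card
    = if k = 0 then 0 else P1 (k-1) (M+1) := by
  by_cases hk : k = 0
  · rw [if_pos hk]
    rw [Finset.card_eq_zero, Finset.filter_eq_empty_iff]
    intro σ _
    omega
  · rw [if_neg hk, P1_eq]
    congr 1
    apply Finset.filter_congr
    intro σ _
    constructor
    · rintro ⟨h1, h2⟩; exact ⟨h1, by omega⟩
    · rintro ⟨h1, h2⟩; exact ⟨h1, by omega⟩

lemma P0_shift (M k : ℕ) :
    (univ.filter (fun σ : Perm (Fin (M+1)) =>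
      ¬ Even ((σ 0 : ℕ)+1) ∧ desEndE (M+1) σ + 1 = k)).card
    = if k = 0 then 0 else P0 (k-1) (M+1) := by
  by_cases hk : k = 0
  · rw [if_pos hk]
    rw [Finset.card_eq_zero, Finset.filter_eq_empty_iff]
    intro σ _
    omega
  · rw [if_neg hk, P0_eq]
    congr 1
    apply Finset.filter_congr
    intro σ _
    constructor
    · rintro ⟨h1, h2⟩; exact ⟨h1, by omega⟩
    · rintro ⟨h1, h2⟩; exact ⟨h1, by omega⟩

lemma recR1 (M k : ℕ) (hM : Even M) :
    P1 k (M+2) = (M/2+2+k) * P1 k (M+1)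
      + (if k = 0 then 0 else (M/2+1-k) * P1 (k-1) (M+1)) + P0 k (M+1) := by
  classical
  have hM2 : M % 2 = 0 := Nat.even_iff.1 hM
  have hE2 : Even (M+2) := by rw [Nat.even_iff]; omega
  rw [P1, card_filter_ins (M := M+1)
    (fun τ => firstEven (M+2) τ ∧ desEndE (M+2) τ = k)]
  have key : ∀ σ : Perm (Fin (M+1)),
      (univ.filter (fun p : Fin (M+2) =>
        firstEven (M+2) (ins p σ) ∧ desEndE (M+2) (ins p σ) = k)).card
      = (if Even ((σ 0 : ℕ)+1) ∧ desEndE (M+1) σ = k then M/2+2+k else 0)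
        + (if Even ((σ 0 : ℕ)+1) ∧ desEndE (M+1) σ + 1 = k then M/2+1-k else 0)
        + (if ¬ Even ((σ 0 : ℕ)+1) ∧ desEndE (M+1) σ = k then 1 else 0) := by
    intro σ
    rw [masterE]
    have e1 := e0_add_des_add_SA σ
    have e2 := SA_add_SB σ
    by_cases hF : Even ((σ 0 : ℕ)+1)
    · rw [if_pos hF] at e1
      simp only [hF, hE2, true_and, not_true_eq_false, false_and, if_false]
      split_ifs <;> omega
    · rw [if_neg hF] at e1
      simp only [hF, hE2, true_and, false_and, not_false_eq_true, if_false]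
      split_ifs <;> omega
  rw [Finset.sum_congr rfl (fun σ _ => key σ)]
  rw [Finset.sum_add_distrib, Finset.sum_add_distrib]
  rw [sum_ite_card, sum_ite_card, sum_ite_card, ← P1_eq, ← P0_eq, P1_shift]
  by_cases hk : k = 0 <;> simp [hk] <;> ring
lemma recR0 (M k : ℕ) (hM : Even M) :
    P0 k (M+2) = (M/2+1+k) * P0 k (M+1)
      + (if k = 0 then 0 else (M/2+1-k) * P0 (k-1) (M+1)) := by
  classical
  have hM2 : M % 2 = 0 := Nat.even_iff.1 hM
  have hE2 : Even (M+2) := by rw [Nat.even_iff]; omega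
  have hO2 : ¬ ¬ Even (M+2) := fun h => h hE2
  rw [P0, card_filter_ins (M := M+1)
    (fun τ => firstOdd (M+2) τ ∧ desEndE (M+2) τ = k)]
  have key : ∀ σ : Perm (Fin (M+1)),
      (univ.filter (fun p : Fin (M+2) =>
        firstOdd (M+2) (ins p σ) ∧ desEndE (M+2) (ins p σ) = k)).card
      = (if ¬ Even ((σ 0 : ℕ)+1) ∧ desEndE (M+1) σ = k then M/2+1+k else 0)
        + (if ¬ Even ((σ 0 : ℕ)+1) ∧ desEndE (M+1) σ + 1 = k then M/2+1-k else 0) := by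
    intro σ
    rw [masterO]
    have e1 := e0_add_des_add_SA σ
    have e2 := SA_add_SB σ
    by_cases hF : Even ((σ 0 : ℕ)+1)
    · rw [if_pos hF] at e1
      simp only [hF, hE2, not_true_eq_false, false_and, if_false, true_and, add_zero, zero_add]
    · rw [if_neg hF] at e1
      simp only [hF, hE2, not_true_eq_false, not_false_eq_true, false_and, if_false,
        true_and, add_zero, zero_add]
      split_ifs <;> omega
  rw [Finset.sum_congr rfl (fun σ _ => key σ)]
  rw [Finset.sum_add_distrib]
  rw [sum_ite_card, sum_ite_card, ← P0_eq, P0_shift]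
  by_cases hk : k = 0 <;> simp [hk] <;> ring

lemma recr1 (M k : ℕ) (hM : ¬ Even M) :
    P1 k (M+2) = ((M+1)/2+1+k) * P1 k (M+1)
      + (if k = 0 then 0 else ((M+1)/2-k) * P1 (k-1) (M+1)) := by
  classical
  have hM2 : M % 2 = 1 := Nat.odd_iff.1 (Nat.not_even_iff_odd.1 hM)
  have hE2 : ¬ Even (M+2) := by rw [Nat.even_iff]; omega
  rw [P1, card_filter_ins (M := M+1)
    (fun τ => firstEven (M+2) τ ∧ desEndE (M+2) τ = k)]
  have key : ∀ σ : Perm (Fin (M+1)),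
      (univ.filter (fun p : Fin (M+2) =>
        firstEven (M+2) (ins p σ) ∧ desEndE (M+2) (ins p σ) = k)).card
      = (if Even ((σ 0 : ℕ)+1) ∧ desEndE (M+1) σ = k then (M+1)/2+1+k else 0)
        + (if Even ((σ 0 : ℕ)+1) ∧ desEndE (M+1) σ + 1 = k then (M+1)/2-k else 0) := by
    intro σ
    rw [masterE]
    have e1 := e0_add_des_add_SA σ
    have e2 := SA_add_SB σ
    by_cases hF : Even ((σ 0 : ℕ)+1)
    · rw [if_pos hF] at e1
      simp only [hF, hE2, false_and, if_false, true_and, add_zero, zero_add]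
      split_ifs <;> omega
    · rw [if_neg hF] at e1
      simp only [hF, hE2, false_and, if_false, true_and, add_zero, zero_add]
  rw [Finset.sum_congr rfl (fun σ _ => key σ)]
  rw [Finset.sum_add_distrib]
  rw [sum_ite_card, sum_ite_card, ← P1_eq, P1_shift]
  by_cases hk : k = 0 <;> simp [hk] <;> ring

lemma recr0 (M k : ℕ) (hM : ¬ Even M) :
    P0 k (M+2) = (if k = 0 then 0 else P1 (k-1) (M+1))
      + ((M+1)/2+1+k) * P0 k (M+1)
      + (if k = 0 then 0 else ((M+1)/2+1-k) * P0 (k-1) (M+1)) := by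
  classical
  have hM2 : M % 2 = 1 := Nat.odd_iff.1 (Nat.not_even_iff_odd.1 hM)
  have hE2 : ¬ Even (M+2) := by rw [Nat.even_iff]; omega
  rw [P0, card_filter_ins (M := M+1)
    (fun τ => firstOdd (M+2) τ ∧ desEndE (M+2) τ = k)]
  have key : ∀ σ : Perm (Fin (M+1)),
      (univ.filter (fun p : Fin (M+2) =>
        firstOdd (M+2) (ins p σ) ∧ desEndE (M+2) (ins p σ) = k)).card
      = (if Even ((σ 0 : ℕ)+1) ∧ desEndE (M+1) σ + 1 = k then 1 else 0)
        + (if ¬ Even ((σ 0 : ℕ)+1) ∧ desEndE (M+1) σ = k then (M+1)/2+1+k else 0)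
        + (if ¬ Even ((σ 0 : ℕ)+1) ∧ desEndE (M+1) σ + 1 = k then (M+1)/2+1-k else 0) := by
    intro σ
    rw [masterO]
    have e1 := e0_add_des_add_SA σ
    have e2 := SA_add_SB σ
    by_cases hF : Even ((σ 0 : ℕ)+1)
    · rw [if_pos hF] at e1
      simp only [hF, hE2, not_true_eq_false, not_false_eq_true, false_and, if_false,
        true_and, add_zero, zero_add]
      split_ifs <;> omega
    · rw [if_neg hF] at e1
      simp only [hF, hE2, not_true_eq_false, not_false_eq_true, false_and, if_false,
        true_and, add_zero, zero_add]
      split_ifs <;> omega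
  rw [Finset.sum_congr rfl (fun σ _ => key σ)]
  rw [Finset.sum_add_distrib, Finset.sum_add_distrib]
  rw [sum_ite_card, sum_ite_card, sum_ite_card, ← P0_eq, P0_shift]
  have hsh : (∑ σ : Perm (Fin (M+1)), if Even ((σ 0 : ℕ)+1) ∧ desEndE (M+1) σ + 1 = k
      then (1:ℕ) else 0) = if k = 0 then 0 else P1 (k-1) (M+1) := by
    rw [sum_ite_card, ← P1_shift, one_mul]
  by_cases hk : k = 0 <;> simp [hk, P1_shift] <;> ring


lemma cast_csre (N t : ℕ) :
    ((N.choose (t+1) : ℤ)) * (t+1) = (N.choose t : ℤ) * ((N:ℤ) - t) := by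
  by_cases h : t ≤ N
  · have hc := Nat.choose_succ_right_eq N t
    zify [h] at hc
    linarith
  · push_neg at h
    rw [Nat.choose_eq_zero_of_lt (by omega), Nat.choose_eq_zero_of_lt (by omega)]
    push_cast
    ring

lemma cast_pascal (N t : ℕ) :
    ((N+1).choose (t+1) : ℤ) = (N.choose t : ℤ) + (N.choose (t+1) : ℤ) := by
  have h : (N+1).choose (t+1) = N.choose t + N.choose (t+1) := Nat.choose_succ_succ' N t
  exact_mod_cast h

lemma L1 (m k : ℕ) :
    (m+2+k)*(Nat.choose m k * Nat.choose (m+1) (k+1))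
      + (if k = 0 then 0 else (m+1-k)*(Nat.choose m (k-1) * Nat.choose (m+1) k))
    = (m+2)*(Nat.choose (m+1) k * Nat.choose (m+1) (k+1)) := by
  rcases k with _ | j
  · simp [Nat.choose_one_right]
  · simp only [Nat.succ_ne_zero, if_false, Nat.add_sub_cancel]
    by_cases hk : j + 1 ≤ m + 1
    · zify [hk]
      have hE1 := cast_csre m j
      have hE2 := cast_csre m (j+1)
      have hA := cast_pascal m j
      have hB := cast_pascal m (j+1)
      rw [hA, hB]
      push_cast at hE2 ⊢
      linear_combination ((m.choose (j+1) : ℤ) + (m.choose (j+2) : ℤ) - (m.choose j : ℤ)) * hE1 - (m.choose j : ℤ) * hE2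
    · rw [Nat.choose_eq_zero_of_lt (by omega), Nat.choose_eq_zero_of_lt (by omega),
          Nat.choose_eq_zero_of_lt (by omega)]
      ring
lemma L2 (m k : ℕ) :
    (if k = 0 then 0 else Nat.choose m (k-1) * Nat.choose (m+1) k)
      + (m+2+k)*(Nat.choose m k * Nat.choose (m+1) k)
      + (if k = 0 then 0 else (m+2-k)*(Nat.choose m (k-1) * Nat.choose (m+1) (k-1)))
    = (m+2)*(Nat.choose (m+1) k * Nat.choose (m+1) k) := by
  rcases k with _ | j
  · simp
  · simp only [Nat.succ_ne_zero, if_false, Nat.add_sub_cancel]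
    by_cases hk : j + 1 ≤ m + 1
    · zify [show j+1 ≤ m+2 by omega]
      have hE1 := cast_csre m j
      have hE3 := cast_csre (m+1) j
      have hA := cast_pascal m j
      push_cast at hE1 hE3 hA ⊢
      linear_combination ((m+1).choose (j+1) : ℤ) * hE1 - (m.choose j : ℤ) * hE3
        - ((m:ℤ)+2) * ((m+1).choose (j+1) : ℤ) * hA
    · rw [Nat.choose_eq_zero_of_lt (show m < j+1 by omega),
          Nat.choose_eq_zero_of_lt (show m+1 < j+1 by omega)]
      have : m+2-(j+1) = 0 := by omega
      rw [this]
      ring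

lemma L3 (n k : ℕ) :
    (n+2+k)*(Nat.choose n k * Nat.choose n (k+1))
      + (if k = 0 then 0 else (n+1-k)*(Nat.choose n (k-1) * Nat.choose n k))
      + Nat.choose n k * Nat.choose n k
    = (n+1)*(Nat.choose n k * Nat.choose (n+1) (k+1)) := by
  rcases k with _ | j
  · simp [Nat.choose_one_right]
    ring
  · simp only [Nat.succ_ne_zero, if_false, Nat.add_sub_cancel]
    by_cases hk : j + 1 ≤ n + 1
    · zify [hk]
      have hE1 := cast_csre n j
      have hE2 := cast_csre n (j+1)
      have hB := cast_pascal n (j+1)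
      push_cast at hE1 hE2 hB ⊢
      linear_combination (n.choose (j+1) : ℤ) * hE2 - (n.choose (j+1) : ℤ) * hE1
        - ((n:ℤ)+1) * (n.choose (j+1) : ℤ) * hB
    · rw [Nat.choose_eq_zero_of_lt (show n < j+1 by omega),
          Nat.choose_eq_zero_of_lt (show n < j+2 by omega)]
      simp

lemma L4 (n k : ℕ) :
    (n+1+k)*(Nat.choose n k * Nat.choose n k)
      + (if k = 0 then 0 else (n+1-k)*(Nat.choose n (k-1) * Nat.choose n (k-1)))
    = (n+1)*(Nat.choose n k * Nat.choose (n+1) k) := by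
  rcases k with _ | j
  · simp
  · simp only [Nat.succ_ne_zero, if_false, Nat.add_sub_cancel]
    by_cases hk : j + 1 ≤ n + 1
    · zify [hk]
      have hE1 := cast_csre n j
      have hA := cast_pascal n j
      push_cast at hE1 hA ⊢
      linear_combination ((n.choose (j+1) : ℤ) - (n.choose j : ℤ)) * hE1
        - ((n:ℤ)+1) * (n.choose (j+1) : ℤ) * hA
    · rw [Nat.choose_eq_zero_of_lt (show n < j+1 by omega)]
      have : n+1-(j+1) = 0 := by omega
      rw [this, Nat.choose_eq_zero_of_lt (show n+1 < j+1 by omega)]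
      ring

lemma desEndE_one (σ : Perm (Fin 1)) : desEndE 1 σ = 0 := by
  rw [desEndE, Finset.card_eq_zero, Finset.filter_eq_empty_iff]
  rintro ⟨p1, p2⟩ -
  rintro ⟨h1, -, -⟩
  have := p2.isLt
  have := p1.isLt
  omega

lemma P1_one (k : ℕ) : P1 k 1 = 0 := by
  rw [P1, Finset.card_eq_zero, Finset.filter_eq_empty_iff]
  rintro σ - ⟨h1, -⟩
  rw [firstEven_iff (M := 0)] at h1
  have : ((σ 0 : Fin 1) : ℕ) = 0 := by omega
  rw [this] at h1
  simp at h1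

lemma P0_one (k : ℕ) : P0 k 1 = if k = 0 then 1 else 0 := by
  rw [P0]
  by_cases hk : k = 0
  · rw [if_pos hk]
    have : (univ.filter (fun σ : Perm (Fin 1) => firstOdd 1 σ ∧ desEndE 1 σ = k)) = univ := by
      rw [Finset.filter_eq_self]
      intro σ _
      refine ⟨?_, by rw [desEndE_one, hk]⟩
      rw [firstOdd_iff (M := 0)]
      have : ((σ 0 : Fin 1) : ℕ) = 0 := by omega
      rw [this]
      simp
    rw [this, Finset.card_univ]
    simp [Fintype.card_perm]
  · rw [if_neg hk, Finset.card_eq_zero, Finset.filter_eq_empty_iff]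
    rintro σ - ⟨-, h2⟩
    rw [desEndE_one] at h2
    omega

lemma main_induction (t : ℕ) : ∀ k,
    P1 k (2*t+2) = Nat.choose t k * Nat.choose (t+1) (k+1) * (Nat.factorial (t+1))^2 ∧
    P0 k (2*t+2) = Nat.choose t k * Nat.choose (t+1) k * (Nat.factorial (t+1))^2 := by
  induction t with
  | zero =>
    intro k
    have e2 : 2*0+2 = 0+2 := by norm_num
    have hR1 := recR1 0 k Even.zero
    have hR0 := recR0 0 k Even.zero
    rw [e2, hR1, hR0]
    rcases k with _ | j
    · simp [P1_one, P0_one]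
    · simp [P1_one, P0_one, Nat.choose_eq_zero_of_lt]
  | succ t IH =>
    intro k
    have hOdd : ¬ Even (2*t+1) := by rw [Nat.even_iff]; omega
    have hEven : Even (2*t+2) := by rw [Nat.even_iff]; omega
    set f2 := (Nat.factorial (t+1))^2 with hf2
    -- intermediate values at odd size 2t+3
    have hp1 : ∀ k', P1 k' (2*t+3) =
        (t+2)*(Nat.choose (t+1) k' * Nat.choose (t+1) (k'+1))*f2 := by
      intro k'
      have h := recr1 (2*t+1) k' hOdd
      rw [show 2*t+1+2 = 2*t+3 by omega, show 2*t+1+1 = 2*t+2 by omega,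
        show (2*t+2)/2 = t+1 by omega] at h
      rw [h, (IH k').1]
      have hsh : (if k' = 0 then 0 else (t+1-k') * P1 (k'-1) (2*t+2))
          = (if k' = 0 then 0 else (t+1-k')*(Nat.choose t (k'-1) * Nat.choose (t+1) k'))*f2 := by
        by_cases hk : k' = 0
        · simp [hk]
        · rcases Nat.exists_eq_succ_of_ne_zero hk with ⟨j, rfl⟩
          rw [if_neg hk, if_neg hk]
          simp only [Nat.succ_sub_one]
          rw [(IH j).1]
          ring
      rw [hsh, ← L1 t k']
      ring
    have hp0 : ∀ k', P0 k' (2*t+3) =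
        (t+2)*(Nat.choose (t+1) k' * Nat.choose (t+1) k')*f2 := by
      intro k'
      have h := recr0 (2*t+1) k' hOdd
      rw [show 2*t+1+2 = 2*t+3 by omega, show 2*t+1+1 = 2*t+2 by omega,
        show (2*t+2)/2 = t+1 by omega] at h
      rw [h, (IH k').2]
      have hsh1 : (if k' = 0 then 0 else P1 (k'-1) (2*t+2))
          = (if k' = 0 then 0 else Nat.choose t (k'-1) * Nat.choose (t+1) k')*f2 := by
        by_cases hk : k' = 0
        · simp [hk]
        · rcases Nat.exists_eq_succ_of_ne_zero hk with ⟨j, rfl⟩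
          rw [if_neg hk, if_neg hk]
          simp only [Nat.succ_sub_one]
          rw [(IH j).1]
      have hsh0 : (if k' = 0 then 0 else (t+1+1-k') * P0 (k'-1) (2*t+2))
          = (if k' = 0 then 0 else (t+2-k')*(Nat.choose t (k'-1) * Nat.choose (t+1) (k'-1)))*f2 := by
        by_cases hk : k' = 0
        · simp [hk]
        · rcases Nat.exists_eq_succ_of_ne_zero hk with ⟨j, rfl⟩
          rw [if_neg hk, if_neg hk]
          simp only [Nat.succ_sub_one]
          rw [(IH j).2]
          have : t+1+1-(j+1) = t+2-(j+1) := by omega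
          rw [this]
          ring
      rw [hsh1, hsh0, ← L2 t k']
      ring
    -- final step at even size 2t+4
    have e4 : 2*(t+1)+2 = (2*t+2)+2 := by omega
    have hd : (2*t+2)/2 = t+1 := by omega
    have hfact : Nat.factorial (t+1+1)^2 = (t+2)*(t+2)*f2 := by
      rw [hf2, Nat.factorial_succ]
      ring
    have hR1 := recR1 (2*t+2) k hEven
    have hR0 := recR0 (2*t+2) k hEven
    rw [show (2*t+2)+1 = 2*t+3 by omega, hd] at hR1 hR0
    constructor
    · rw [e4, hR1, hp1 k, hp0 k]
      have hsh : (if k = 0 then 0 else (t+1+1-k) * P1 (k-1) (2*t+3))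
          = (if k = 0 then 0 else (t+1+1-k)*(Nat.choose (t+1) (k-1) * Nat.choose (t+1) k))*((t+2)*f2) := by
        by_cases hk : k = 0
        · simp [hk]
        · rcases Nat.exists_eq_succ_of_ne_zero hk with ⟨j, rfl⟩
          rw [if_neg hk, if_neg hk]
          simp only [Nat.succ_sub_one]
          rw [hp1 j]
          ring
      rw [hsh, hfact]
      have hL3 := L3 (t+1) k
      calc (t+1+2+k) * ((t+2) * (Nat.choose (t+1) k * Nat.choose (t+1) (k+1)) * f2)
            + (if k = 0 then 0 else (t+1+1-k)*(Nat.choose (t+1) (k-1) * Nat.choose (t+1) k))*((t+2)*f2)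
            + (t+2) * (Nat.choose (t+1) k * Nat.choose (t+1) k) * f2
          = ((t+1+2+k) * (Nat.choose (t+1) k * Nat.choose (t+1) (k+1))
              + (if k = 0 then 0 else (t+1+1-k)*(Nat.choose (t+1) (k-1) * Nat.choose (t+1) k))
              + Nat.choose (t+1) k * Nat.choose (t+1) k) * ((t+2)*f2) := by
            ring
        _ = ((t+1+1) * (Nat.choose (t+1) k * Nat.choose (t+1+1) (k+1))) * ((t+2)*f2) := by
              rw [hL3]
        _ = Nat.choose (t+1) k * Nat.choose (t+1+1) (k+1) * ((t+2)*(t+2)*f2) := by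
              ring
    · rw [e4, hR0, hp0 k]
      have hsh : (if k = 0 then 0 else (t+1+1-k) * P0 (k-1) (2*t+3))
          = (if k = 0 then 0 else (t+1+1-k)*(Nat.choose (t+1) (k-1) * Nat.choose (t+1) (k-1)))*((t+2)*f2) := by
        by_cases hk : k = 0
        · simp [hk]
        · rcases Nat.exists_eq_succ_of_ne_zero hk with ⟨j, rfl⟩
          rw [if_neg hk, if_neg hk]
          simp only [Nat.succ_sub_one]
          rw [hp0 j]
          ring
      rw [hsh, hfact]
      have hL4 := L4 (t+1) k
      calc (t+1+1+k) * ((t+2) * (Nat.choose (t+1) k * Nat.choose (t+1) k) * f2)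
            + (if k = 0 then 0 else (t+1+1-k)*(Nat.choose (t+1) (k-1) * Nat.choose (t+1) (k-1)))*((t+2)*f2)
          = ((t+1+1+k) * (Nat.choose (t+1) k * Nat.choose (t+1) k)
              + (if k = 0 then 0 else (t+1+1-k)*(Nat.choose (t+1) (k-1) * Nat.choose (t+1) (k-1)))) * ((t+2)*f2) := by
            ring
        _ = ((t+1+1) * (Nat.choose (t+1) k * Nat.choose (t+1+1) k)) * ((t+2)*f2) := by
              rw [hL4]
        _ = Nat.choose (t+1) k * Nat.choose (t+1+1) k * ((t+2)*(t+2)*f2) := by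
              ring


theorem stmt_10 (n k : ℕ) (hn : 1 ≤ n) (hk : k ≤ n) :
    P1 k (2*n) = Nat.choose (n-1) k * Nat.choose n (k+1) * (Nat.factorial n)^2 ∧
    P0 k (2*n) = Nat.choose (n-1) k * Nat.choose n k * (Nat.factorial n)^2 := by
  obtain ⟨t, rfl⟩ : ∃ t, n = t+1 := ⟨n-1, by omega⟩
  have h := main_induction t k
  rw [show 2*(t+1) = 2*t+2 by omega]
  simpa [Nat.succ_sub_one] using h

end DescentParity
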